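/- Let g : ℝᵖ → ℝ be convex and ℓ_g-Lipschitz, A : ℝⁿ → ℝᵖ be C¹ with L_A-Lipschitz Jacobian, x, d ∈ ℝⁿ, v ∈ ℝᵖ, and η ∈ [0,1]. Then g(A(x + ηd)) ≤ (1 − η) g(A(x)) + η g(A(x) + v) + η ℓ_g ‖∇A(x)d − v‖ + (ℓ_g L_A/2) η² ‖d‖². -/

import Mathlib

/-!
The point `A x + η v = (1 - η) A x + η (A x + v)` is a convex combination, so convexity bounds `g`
there by `(1 - η) g(A x) + η g(A x + v)`. The Lipschitz constant of `g` then pays for the distance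
from this point to `A (x + η d)`, which the first-order Taylor expansion of `A` at `x` bounds by
`η ‖∇A(x) d - v‖ + (L_A / 2) η² ‖d‖²`.
-/

open scoped NNReal

section Taylor

variable {E F : Type*} [NormedAddCommGroup E] [NormedSpace ℝ E]
  [NormedAddCommGroup F] [NormedSpace ℝ F]

theorem norm_image_sub_sub_fderiv_le_of_lipschitzWith_fderiv {A : E → F} {DA : E → E →L[ℝ] F}
    {LA : ℝ≥0} (hdiff : ∀ x, HasFDerivAt A (DA x) x) (hDAlip : LipschitzWith LA DA) (x u : E) :
    ‖A (x + u) - A x - DA x u‖ ≤ LA / 2 * ‖u‖ ^ 2 := by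
  -- Compare the remainder along `t ↦ x + t • u` with `t ↦ LA ‖u‖² t² / 2`, whose derivative
  -- `LA ‖u‖² t` dominates the norm of the remainder's derivative `DA (x + t • u) u - DA x u`.
  set f : ℝ → F := fun t => A (x + t • u) - t • DA x u - A x with hf
  have hf_deriv (t : ℝ) : HasDerivAt f (DA (x + t • u) u - DA x u) t := by
    have hline : HasDerivAt (fun t : ℝ => x + t • u) u t := by
      simpa using ((hasDerivAt_id t).smul_const u).const_add x
    have hlin : HasDerivAt (fun t : ℝ => t • DA x u) (DA x u) t := by
      simpa using (hasDerivAt_id t).smul_const (DA x u)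
    exact (((hdiff _).comp_hasDerivAt t hline).sub hlin).sub_const (A x)
  have hB_deriv (t : ℝ) : HasDerivAt (fun t : ℝ => LA * ‖u‖ ^ 2 * t ^ 2 / 2)
      (LA * ‖u‖ ^ 2 * t) t := by
    refine (((hasDerivAt_pow 2 t).const_mul ((LA : ℝ) * ‖u‖ ^ 2)).div_const 2).congr_deriv ?_
    ring
  have hf_deriv_le : ∀ t ∈ Set.Ico (0 : ℝ) 1,
      ‖DA (x + t • u) u - DA x u‖ ≤ LA * ‖u‖ ^ 2 * t := by
    rintro t ⟨ht₀, -⟩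
    have hDA : ‖DA (x + t • u) - DA x‖ ≤ LA * (t * ‖u‖) := by
      simpa [dist_eq_norm, norm_smul, abs_of_nonneg ht₀] using
        hDAlip.dist_le_mul (x + t • u) x
    calc ‖DA (x + t • u) u - DA x u‖ ≤ ‖DA (x + t • u) - DA x‖ * ‖u‖ :=
          (DA (x + t • u) - DA x).le_opNorm u
      _ ≤ LA * (t * ‖u‖) * ‖u‖ := by gcongr
      _ = LA * ‖u‖ ^ 2 * t := by ring
  have hf_one := image_norm_le_of_norm_deriv_right_le_deriv_boundary
    (fun t _ => (hf_deriv t).continuousAt.continuousWithinAt)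
    (fun t _ => (hf_deriv t).hasDerivWithinAt) (by simp [hf]) hB_deriv hf_deriv_le
    (Set.right_mem_Icc.2 zero_le_one)
  have hf_one_eq : f 1 = A (x + u) - A x - DA x u := by simp only [hf, one_smul]; abel
  rw [hf_one_eq] at hf_one
  linarith

theorem norm_image_add_smul_sub_le {A : E → F} {DA : E → E →L[ℝ] F} {LA : ℝ≥0}
    (hdiff : ∀ x, HasFDerivAt A (DA x) x) (hDAlip : LipschitzWith LA DA)
    (x d : E) (v : F) {η : ℝ} (hη₀ : 0 ≤ η) :
    ‖A (x + η • d) - (A x + η • v)‖ ≤ η * ‖DA x d - v‖ + LA / 2 * η ^ 2 * ‖d‖ ^ 2 := by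
  have hsplit : A (x + η • d) - (A x + η • v) =
      (A (x + η • d) - A x - DA x (η • d)) + η • (DA x d - v) := by
    rw [map_smul]; module
  calc ‖A (x + η • d) - (A x + η • v)‖
      ≤ ‖A (x + η • d) - A x - DA x (η • d)‖ + ‖η • (DA x d - v)‖ := by
        rw [hsplit]; exact norm_add_le _ _
    _ ≤ LA / 2 * ‖η • d‖ ^ 2 + η * ‖DA x d - v‖ := by
        gcongr
        · exact norm_image_sub_sub_fderiv_le_of_lipschitzWith_fderiv hdiff hDAlip x _
        · rw [norm_smul, Real.norm_of_nonneg hη₀]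
    _ = η * ‖DA x d - v‖ + LA / 2 * η ^ 2 * ‖d‖ ^ 2 := by
        rw [norm_smul, Real.norm_of_nonneg hη₀]; ring

end Taylor

theorem ConvexOn.le_segment_add_of_lipschitzWith {F : Type*} [NormedAddCommGroup F]
    [NormedSpace ℝ F] {g : F → ℝ} {K : ℝ≥0} (hgconv : ConvexOn ℝ Set.univ g)
    (hglip : LipschitzWith K g) (a b y : F) {η : ℝ} (hη₀ : 0 ≤ η) (hη₁ : η ≤ 1) :
    g y ≤ (1 - η) * g a + η * g b + K * ‖y - ((1 - η) • a + η • b)‖ := by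
  have hconv : g ((1 - η) • a + η • b) ≤ (1 - η) * g a + η * g b :=
    hgconv.2 (Set.mem_univ a) (Set.mem_univ b) (by linarith) hη₀ (by ring)
  have hlip : g y - g ((1 - η) • a + η • b) ≤ K * ‖y - ((1 - η) • a + η • b)‖ := by
    simpa [dist_eq_norm] using (le_abs_self _).trans (hglip.dist_le_mul y _)
  linarith

/-- If `g : ℝᵖ → ℝ` is convex and `ℓ_g`-Lipschitz and `A : ℝⁿ → ℝᵖ` is differentiable
with `L_A`-Lipschitz Jacobian, then for all `x, d, v` and `η ∈ [0,1]`,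
`g(A(x + ηd)) ≤ (1 − η)g(A(x)) + ηg(A(x) + v) + ηℓ_g‖∇A(x)d − v‖ + (ℓ_g L_A/2)η²‖d‖²`. -/
theorem stmt10 {n p : ℕ}
    (g : EuclideanSpace ℝ (Fin p) → ℝ)
    (A : EuclideanSpace ℝ (Fin n) → EuclideanSpace ℝ (Fin p))
    (DA : EuclideanSpace ℝ (Fin n) →
      (EuclideanSpace ℝ (Fin n) →L[ℝ] EuclideanSpace ℝ (Fin p)))
    (ℓg LA : ℝ≥0)
    (hgconv : ConvexOn ℝ Set.univ g)
    (hglip : LipschitzWith ℓg g)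
    (hdiff : ∀ x, HasFDerivAt A (DA x) x)
    (hDAlip : LipschitzWith LA DA)
    (x d : EuclideanSpace ℝ (Fin n)) (v : EuclideanSpace ℝ (Fin p))
    (η : ℝ) (hη₀ : 0 ≤ η) (hη₁ : η ≤ 1) :
    g (A (x + η • d)) ≤
      (1 - η) * g (A x) + η * g (A x + v) + η * (ℓg : ℝ) * ‖DA x d - v‖ +
        ((ℓg : ℝ) * (LA : ℝ) / 2) * η ^ 2 * ‖d‖ ^ 2 := by
  have hcomb : (1 - η) • A x + η • (A x + v) = A x + η • v := by module
  have hconv := hgconv.le_segment_add_of_lipschitzWith hglip (A x) (A x + v) (A (x + η • d))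
    hη₀ hη₁
  rw [hcomb] at hconv
  have hdist := norm_image_add_smul_sub_le hdiff hDAlip x d v hη₀
  calc g (A (x + η • d))
      ≤ (1 - η) * g (A x) + η * g (A x + v) + ℓg * ‖A (x + η • d) - (A x + η • v)‖ := hconv
    _ ≤ (1 - η) * g (A x) + η * g (A x + v) +
        ℓg * (η * ‖DA x d - v‖ + LA / 2 * η ^ 2 * ‖d‖ ^ 2) := by gcongr
    _ = _ := by ring
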